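/- arXiv:1910.03174 — 7 statements merged into one kernel-verified Lean document; each statement's English description precedes it below -/
import Mathlib

section
/- The function z ↦ ς(z)/z is strictly increasing on (0,∞) and tends to 1 as z → ∞, where ς(z) = √(1+z²) + ln(z/(1+√(1+z²))). -/
noncomputable def varsigma (z : ℝ) : ℝ :=
  Real.sqrt (1 + z ^ 2) + Real.log (z / (1 + Real.sqrt (1 + z ^ 2)))

/-! Since `arsinh (1/z) = log ((1 + √(1 + z²)) / z)`, we have
`ς(z) = √(1 + z²) - arsinh (1/z)`, hence `ς(z)/z = g(1/z)` with
`g t = √(1 + t²) - t · arsinh t`.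
As `g' = -arsinh < 0` on `(0, ∞)`, `g` is strictly decreasing there, so `ς(z)/z` is strictly
increasing; and `ς(z)/z → g 0 = 1`. -/

open Real Filter Set

lemma hasDerivAt_sqrt_one_add_sq_sub_mul_arsinh (t : ℝ) :
    HasDerivAt (fun t => √(1 + t ^ 2) - t * arsinh t) (-arsinh t) t := by
  have hsq : HasDerivAt (fun t : ℝ => 1 + t ^ 2) (2 * t) t := by
    simpa using (hasDerivAt_pow 2 t).const_add 1
  refine ((hsq.sqrt (by positivity)).sub
    ((hasDerivAt_id' t).mul (hasDerivAt_arsinh t))).congr_deriv ?_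
  rw [mul_div_mul_left _ _ two_ne_zero]
  ring

lemma strictAntiOn_sqrt_one_add_sq_sub_mul_arsinh :
    StrictAntiOn (fun t => √(1 + t ^ 2) - t * arsinh t) (Ici 0) := by
  refine strictAntiOn_of_hasDerivWithinAt_neg (convex_Ici 0)
    (fun t _ => (hasDerivAt_sqrt_one_add_sq_sub_mul_arsinh t).continuousAt.continuousWithinAt)
    (fun t _ => (hasDerivAt_sqrt_one_add_sq_sub_mul_arsinh t).hasDerivWithinAt) ?_
  intro t ht
  rw [interior_Ici] at ht
  exact neg_neg_of_pos (arsinh_pos_iff.2 ht)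

lemma sqrt_one_add_inv_sq {z : ℝ} (hz : 0 < z) : √(1 + z⁻¹ ^ 2) = √(1 + z ^ 2) / z := by
  rw [show 1 + z⁻¹ ^ 2 = (1 + z ^ 2) / z ^ 2 by field_simp; ring, sqrt_div' _ (sq_nonneg z),
    sqrt_sq hz.le]

lemma varsigma_eq_sqrt_sub_arsinh_inv {z : ℝ} (hz : 0 < z) :
    varsigma z = √(1 + z ^ 2) - arsinh z⁻¹ := by
  have hlog : arsinh z⁻¹ = -log (z / (1 + √(1 + z ^ 2))) := by
    rw [arsinh, sqrt_one_add_inv_sq hz, ← log_inv, inv_div]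
    congr 1
    field_simp
  rw [varsigma, hlog, sub_neg_eq_add]

lemma varsigma_div_eq_sqrt_sub_mul_arsinh_inv {z : ℝ} (hz : 0 < z) :
    varsigma z / z = √(1 + z⁻¹ ^ 2) - z⁻¹ * arsinh z⁻¹ := by
  rw [varsigma_eq_sqrt_sub_arsinh_inv hz, sqrt_one_add_inv_sq hz, sub_div, inv_mul_eq_div]

theorem varsigma_div_strictMono_tendsto_one :
    StrictMonoOn (fun z => varsigma z / z) (Set.Ioi (0 : ℝ)) ∧
    Filter.Tendsto (fun z => varsigma z / z) Filter.atTop (nhds 1) := by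
  have hEq : EqOn ((fun t => √(1 + t ^ 2) - t * arsinh t) ∘ fun z => z⁻¹)
      (fun z => varsigma z / z) (Ioi 0) :=
    fun z hz => (varsigma_div_eq_sqrt_sub_mul_arsinh_inv hz).symm
  constructor
  · exact (strictAntiOn_sqrt_one_add_sq_sub_mul_arsinh.comp inv_strictAntiOn
      fun z (hz : 0 < z) => (inv_pos.2 hz).le).congr hEq
  · have hg : Continuous fun t => √(1 + t ^ 2) - t * arsinh t :=
      (continuous_const.add (continuous_pow 2)).sqrt.sub (continuous_id.mul continuous_arsinh)
    have := (hg.tendsto 0).comp tendsto_inv_atTop_zero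
    simp only [zero_pow two_ne_zero, add_zero, sqrt_one, zero_mul, sub_zero] at this
    exact this.congr' (eventuallyEq_of_mem (Ioi_mem_atTop 0) hEq)
end

section
/- For fixed μ > 0, the function g(z) = -1 + 2(ς(z)+μ)/z on (0,∞) attains its absolute maximum at z₀ = 1/sinh(μ) = 2/(e^μ - e^{-μ}), and the maximum value is g(z₀) = e^μ - 1 + e^{-μ}. -/
/-!
For every `z > 0` one has `ς(z) + μ ≤ z cosh μ`: bound the logarithm by the tangent line
`log x ≤ e^μ x - 1 - μ` (touching at `x = e^{-μ}`), after which what remains is the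
Cauchy–Schwarz inequality `z + sinh μ ≤ cosh μ √(1 + z²)`. At `z = 1 / sinh μ` both steps are
equalities. Hence `g ≤ 2 cosh μ - 1 = e^μ - 1 + e^{-μ}`, with equality at `1 / sinh μ`.
-/

open Real

theorem add_sinh_le_cosh_mul_sqrt (μ z : ℝ) : z + sinh μ ≤ cosh μ * √(1 + z ^ 2) := by
  have hcosh : cosh μ = √(1 + sinh μ ^ 2) := by
    rw [← cosh_sq', sqrt_sq (cosh_pos μ).le]
  rw [hcosh, ← sqrt_mul (by positivity)]
  refine (le_abs_self _).trans (abs_le_sqrt ?_)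
  nlinarith [sq_nonneg (z * sinh μ - 1)]

theorem log_le_exp_mul_sub_one_sub {x : ℝ} (hx : 0 < x) (μ : ℝ) :
    log x ≤ exp μ * x - 1 - μ := by
  have h := log_le_sub_one_of_pos (mul_pos (exp_pos μ) hx)
  rw [log_mul (exp_pos μ).ne' hx.ne', log_exp] at h
  linarith

theorem varsigma_add_le_mul_cosh (μ : ℝ) {z : ℝ} (hz : 0 < z) :
    varsigma z + μ ≤ z * cosh μ := by
  set s := √(1 + z ^ 2)
  have hs2 : s ^ 2 = 1 + z ^ 2 := sq_sqrt (by positivity)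
  have hs0 : 0 ≤ s := sqrt_nonneg _
  have hlog := log_le_exp_mul_sub_one_sub (div_pos hz (by positivity : 0 < 1 + s)) μ
  have hgap : z * cosh μ - (s + exp μ * (z / (1 + s)) - 1)
      = z * (cosh μ * s - (z + sinh μ)) / (1 + s) := by
    rw [← cosh_add_sinh]
    field_simp
    linear_combination -hs2
  have hCS : 0 ≤ cosh μ * s - (z + sinh μ) := sub_nonneg.mpr (add_sinh_le_cosh_mul_sqrt μ z)
  have hgap_nonneg : 0 ≤ z * cosh μ - (s + exp μ * (z / (1 + s)) - 1) := by
    rw [hgap]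
    positivity
  rw [varsigma]
  linarith

theorem varsigma_one_div_sinh {μ : ℝ} (hμ : 0 < μ) :
    varsigma (1 / sinh μ) = cosh μ / sinh μ - μ := by
  have hsinh : 0 < sinh μ := sinh_pos_iff.mpr hμ
  have hsqrt : √(1 + (1 / sinh μ) ^ 2) = cosh μ / sinh μ := by
    rw [← sqrt_sq (div_pos (cosh_pos μ) hsinh).le, div_pow (cosh μ), cosh_sq']
    field_simp
    ring_nf
  have harg : 1 / sinh μ / (1 + cosh μ / sinh μ) = exp (-μ) := by
    rw [exp_neg, ← cosh_add_sinh]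
    field_simp
    ring
  rw [varsigma, hsqrt, harg, log_exp]
  ring

theorem g_max_at_csch (μ : ℝ) (hμ : 0 < μ)
    (g : ℝ → ℝ) (hg : ∀ z, g z = -1 + 2 * (varsigma z + μ) / z)
    (z₀ : ℝ) (hz₀ : z₀ = 2 / (Real.exp μ - Real.exp (-μ))) :
    z₀ = 1 / Real.sinh μ ∧
    (∀ z : ℝ, 0 < z → g z ≤ g z₀) ∧
    g z₀ = Real.exp μ - 1 + Real.exp (-μ) := by
  have hz₀_csch : z₀ = 1 / sinh μ := by rw [hz₀, sinh_eq, one_div_div]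
  have hgz₀ : g z₀ = -1 + 2 * cosh μ := by
    have hsinh : 0 < sinh μ := sinh_pos_iff.mpr hμ
    rw [hg, hz₀_csch, varsigma_one_div_sinh hμ]
    field_simp
    ring
  refine ⟨hz₀_csch, fun z hz => ?_, by rw [hgz₀, cosh_eq]; ring⟩
  have hbound : 2 * (varsigma z + μ) / z ≤ 2 * cosh μ := by
    rw [div_le_iff₀ hz]
    linarith [varsigma_add_le_mul_cosh μ hz]
  rw [hg, hgz₀]
  linarith
end

section
/- The function c(μ) = (e^μ - 1 + e^{-μ})/μ on (0,∞) has a unique critical point μ*; it is strictly decreasing on (0, μ*] and strictly increasing on (μ*, ∞). -/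
/-
Writing c(μ) = (2 cosh μ - 1) / μ, one gets c'(μ) = g(μ) / μ² with
g(μ) = 2μ sinh μ - 2 cosh μ + 1. Since g'(μ) = 2μ cosh μ > 0, g is strictly increasing on
[0, ∞), and it changes sign there because g(0) = -1 and g(1) = 1 - 2/e > 0. Its unique zero μ* is
the unique critical point of c, and c' has the sign of g on either side of it.
-/

noncomputable def waveSpeed (μ : ℝ) : ℝ := (Real.exp μ - 1 + Real.exp (-μ)) / μ

open Real Set

namespace WaveSpeed

noncomputable def derivNumerator (μ : ℝ) : ℝ := 2 * μ * sinh μ - (2 * cosh μ - 1)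

lemma waveSpeed_eq (μ : ℝ) : waveSpeed μ = (2 * cosh μ - 1) / μ := by
  rw [waveSpeed, cosh_eq]
  ring

lemma hasDerivAt_waveSpeed {μ : ℝ} (hμ : μ ≠ 0) :
    HasDerivAt waveSpeed (derivNumerator μ / μ ^ 2) μ := by
  rw [show waveSpeed = fun x => (2 * cosh x - 1) / x from funext waveSpeed_eq]
  refine ((((hasDerivAt_cosh μ).const_mul 2).sub_const 1).fun_div
    (hasDerivAt_id' μ) hμ).congr_deriv ?_
  rw [derivNumerator]
  ring

lemma deriv_waveSpeed {μ : ℝ} (hμ : μ ≠ 0) :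
    deriv waveSpeed μ = derivNumerator μ / μ ^ 2 :=
  (hasDerivAt_waveSpeed hμ).deriv

lemma continuousOn_waveSpeed : ContinuousOn waveSpeed (Ioi 0) :=
  fun _ hμ => (hasDerivAt_waveSpeed (ne_of_gt hμ)).continuousAt.continuousWithinAt

lemma hasDerivAt_derivNumerator (μ : ℝ) :
    HasDerivAt derivNumerator (2 * μ * cosh μ) μ := by
  refine ((((hasDerivAt_id' μ).const_mul 2).fun_mul (hasDerivAt_sinh μ)).fun_sub
    (((hasDerivAt_cosh μ).const_mul 2).sub_const 1)).congr_deriv ?_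
  ring

lemma continuous_derivNumerator : Continuous derivNumerator :=
  continuous_iff_continuousAt.2 fun μ => (hasDerivAt_derivNumerator μ).continuousAt

lemma derivNumerator_strictMonoOn : StrictMonoOn derivNumerator (Ici 0) := by
  refine strictMonoOn_of_deriv_pos (convex_Ici 0) continuous_derivNumerator.continuousOn ?_
  intro μ hμ
  rw [interior_Ici] at hμ
  rw [(hasDerivAt_derivNumerator μ).deriv]
  exact mul_pos (mul_pos two_pos hμ) (cosh_pos μ)

lemma derivNumerator_zero : derivNumerator 0 = -1 := by
  norm_num [derivNumerator]

lemma derivNumerator_one_pos : 0 < derivNumerator 1 := by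
  have hcs : cosh 1 - sinh 1 = (exp 1)⁻¹ := by rw [cosh_sub_sinh, exp_neg]
  have he : 2 < exp 1 := by linarith [add_one_lt_exp one_ne_zero]
  have : (exp 1)⁻¹ < 1 / 2 := by
    rw [inv_lt_comm₀ (exp_pos 1) one_half_pos]
    linarith
  rw [derivNumerator]
  linarith

lemma exists_derivNumerator_eq_zero : ∃ μs ∈ Ioo (0 : ℝ) 1, derivNumerator μs = 0 := by
  refine intermediate_value_Ioo zero_le_one continuous_derivNumerator.continuousOn ?_
  rw [derivNumerator_zero]
  exact ⟨neg_one_lt_zero, derivNumerator_one_pos⟩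

end WaveSpeed

open WaveSpeed in
theorem waveSpeed_unique_critical_point :
    ∃ μs : ℝ, 0 < μs ∧ deriv waveSpeed μs = 0 ∧
      (∀ μ : ℝ, 0 < μ → deriv waveSpeed μ = 0 → μ = μs) ∧
      StrictAntiOn waveSpeed (Set.Ioc 0 μs) ∧
      StrictMonoOn waveSpeed (Set.Ioi μs) := by
  obtain ⟨μs, ⟨hμs, -⟩, hzero⟩ := exists_derivNumerator_eq_zero
  have hmono := derivNumerator_strictMonoOn
  refine ⟨μs, hμs, by rw [deriv_waveSpeed hμs.ne', hzero, zero_div], ?_, ?_, ?_⟩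
  · intro μ hμ hcrit
    rw [deriv_waveSpeed hμ.ne', div_eq_zero_iff, or_iff_left (pow_ne_zero 2 hμ.ne')] at hcrit
    exact hmono.injOn hμ.le hμs.le (hcrit.trans hzero.symm)
  · refine strictAntiOn_of_deriv_neg (convex_Ioc 0 μs)
      (continuousOn_waveSpeed.mono Ioc_subset_Ioi_self) fun μ hμ => ?_
    rw [interior_Ioc] at hμ
    rw [deriv_waveSpeed hμ.1.ne']
    refine div_neg_of_neg_of_pos ?_ (pow_pos hμ.1 2)
    exact hzero ▸ hmono hμ.1.le hμs.le hμ.2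
  · refine strictMonoOn_of_deriv_pos (convex_Ioi μs)
      (continuousOn_waveSpeed.mono (Ioi_subset_Ioi hμs.le)) fun μ hμ => ?_
    rw [interior_Ioi] at hμ
    have hμ0 : 0 < μ := hμs.trans hμ
    rw [deriv_waveSpeed hμ0.ne']
    exact div_pos (hzero ▸ hmono hμs.le hμ0.le hμ) (pow_pos hμ0 2)
end

section
/- Poincaré inequality on the integer line: Let r be a positive integer, x₀ ∈ ℤ, and v : ℤ → ℝ. Let B = {x ∈ ℤ : |x - x₀| ≤ r} and v̄ = (1/(2r+1)) ∑_{x ∈ B} v(x). Then ∑_{x ∈ B} 2(v(x) - v̄)² ≤ 12 r² ∑_{x, x+1 ∈ B} 2(v(x+1) - v(x))², where the right-hand sum counts each edge of B in both directions (i.e., equals 2 ∑_{x=x₀-r}^{x₀+r-1} 2(v(x+1)-v(x))²). -/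
/-!
Compare with the value at the centre: the mean minimises `c ↦ ∑ (v x - c)²`, and by
Cauchy–Schwarz along the at most `r` edges joining `x₀` to `x ∈ B`, `(v x - v x₀)²` is at
most `r` times the Dirichlet energy of `v` on `B`. Hence the variance is at most `r (2r + 1)`
times the energy, well within the constant `12 r²`.
-/

open Finset

theorem sum_sq_sub_mean_le_sum_sq_sub {ι : Type*} (s : Finset ι) (f : ι → ℝ) (c : ℝ) :
    ∑ x ∈ s, (f x - (∑ y ∈ s, f y) / #s) ^ 2 ≤ ∑ x ∈ s, (f x - c) ^ 2 := by
  set m := (∑ y ∈ s, f y) / #s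
  have h_centered : ∑ x ∈ s, (f x - m) = 0 := by
    rcases s.eq_empty_or_nonempty with rfl | hs
    · simp
    · rw [sum_sub_distrib, sum_const, nsmul_eq_mul, mul_div_cancel₀ _ (by positivity), sub_self]
  have h_split : ∑ x ∈ s, (f x - c) ^ 2
      = ∑ x ∈ s, (f x - m) ^ 2 + 2 * (m - c) * ∑ x ∈ s, (f x - m) + #s * (m - c) ^ 2 := by
    rw [mul_sum, ← sum_add_distrib, ← nsmul_eq_mul, ← sum_const, ← sum_add_distrib]
    exact sum_congr rfl fun x _ => by ring
  rw [h_split, h_centered]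
  nlinarith [sq_nonneg (m - c)]

theorem Int.sum_Ico_sub {M : Type*} [AddCommGroup M] (v : ℤ → M) {a b : ℤ} (hab : a ≤ b) :
    ∑ z ∈ Ico a b, (v (z + 1) - v z) = v b - v a := by
  induction b, hab using Int.leInduction with
  | base => simp
  | succ b hab ih =>
    rw [← insert_Ico_right_eq_Ico_add_one hab, sum_insert (by simp), ih]
    abel

theorem Int.sq_sub_le_mul_sum_sq_sub (v : ℤ → ℝ) {a b : ℤ} (hab : a ≤ b) :
    (v b - v a) ^ 2 ≤ (b - a) * ∑ z ∈ Ico a b, (v (z + 1) - v z) ^ 2 := by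
  have := sq_sum_le_card_mul_sum_sq (s := Ico a b) (f := fun z => v (z + 1) - v z)
  rwa [Int.sum_Ico_sub v hab, ← Int.cast_natCast, Int.card_Ico_of_le a b hab,
    Int.cast_sub] at this

theorem Int.sq_sub_le_mul_sum_sq_sub_of_Ico_subset (v : ℤ → ℝ) {a b : ℤ} {L : ℝ}
    {s : Finset ℤ} (hab : a ≤ b) (hL : (b - a : ℝ) ≤ L) (hs : Ico a b ⊆ s) :
    (v b - v a) ^ 2 ≤ L * ∑ z ∈ s, (v (z + 1) - v z) ^ 2 :=
  (Int.sq_sub_le_mul_sum_sq_sub v hab).trans <|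
    mul_le_mul hL (sum_le_sum_of_subset_of_nonneg hs fun _ _ _ => sq_nonneg _)
      (sum_nonneg fun _ _ => sq_nonneg _) ((sub_nonneg.2 (Int.cast_le.2 hab)).trans hL)

theorem Int.sq_sub_le_mul_sum_sq_sub_Ico_of_mem_Icc (v : ℤ → ℝ) {x₀ x : ℤ} {r : ℕ}
    (hx : x ∈ Icc (x₀ - r) (x₀ + r)) :
    (v x - v x₀) ^ 2 ≤ r * ∑ z ∈ Ico (x₀ - r) (x₀ + r), (v (z + 1) - v z) ^ 2 := by
  rw [mem_Icc] at hx
  rcases le_total x₀ x with h | h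
  · exact Int.sq_sub_le_mul_sum_sq_sub_of_Ico_subset v h
      (by exact_mod_cast (by omega : x - x₀ ≤ r)) (Ico_subset_Ico (by omega) (by omega))
  · rw [← neg_sub, neg_sq]
    exact Int.sq_sub_le_mul_sum_sq_sub_of_Ico_subset v h
      (by exact_mod_cast (by omega : x₀ - x ≤ r)) (Ico_subset_Ico (by omega) (by omega))

theorem poincare_inequality_on_Z_general (r : ℕ) (x₀ : ℤ) (v : ℤ → ℝ)
    (vbar : ℝ)
    (hvbar : vbar = (∑ x ∈ Finset.Icc (x₀ - r) (x₀ + r), v x) / (2 * r + 1)) :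
    ∑ x ∈ Finset.Icc (x₀ - r) (x₀ + r), 2 * (v x - vbar) ^ 2 ≤
      12 * (r : ℝ) ^ 2 *
        (2 * ∑ x ∈ Finset.Icc (x₀ - r) (x₀ + r - 1), 2 * (v (x + 1) - v x) ^ 2) := by
  set B := Icc (x₀ - r) (x₀ + r)
  set S := ∑ z ∈ Ico (x₀ - r) (x₀ + r), (v (z + 1) - v z) ^ 2
  have h_card : (#B : ℝ) = 2 * r + 1 := by
    rw [← Int.cast_natCast, Int.card_Icc_of_le _ _ (by omega)]
    push_cast
    ring
  have h_var : ∑ x ∈ B, (v x - vbar) ^ 2 ≤ (2 * r + 1) * (r * S) :=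
    calc ∑ x ∈ B, (v x - vbar) ^ 2 ≤ ∑ x ∈ B, (v x - v x₀) ^ 2 := by
          rw [hvbar, ← h_card]
          exact sum_sq_sub_mean_le_sum_sq_sub B v (v x₀)
      _ ≤ ∑ _x ∈ B, r * S :=
          sum_le_sum fun x hx => Int.sq_sub_le_mul_sum_sq_sub_Ico_of_mem_Icc v hx
      _ = (2 * r + 1) * (r * S) := by rw [sum_const, nsmul_eq_mul, h_card]
  have h_S : 0 ≤ S := sum_nonneg fun _ _ => sq_nonneg _
  have h_r : (r : ℝ) ≤ r ^ 2 := by exact_mod_cast Nat.le_self_pow two_ne_zero r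
  rw [← mul_sum, Icc_sub_one_right_eq_Ico, ← mul_sum]
  nlinarith [mul_le_mul_of_nonneg_right h_r h_S]

theorem poincare_inequality_on_Z (r : ℕ) (hr : 0 < r) (x₀ : ℤ) (v : ℤ → ℝ)
    (vbar : ℝ)
    (hvbar : vbar = (∑ x ∈ Finset.Icc (x₀ - r) (x₀ + r), v x) / (2 * r + 1)) :
    ∑ x ∈ Finset.Icc (x₀ - r) (x₀ + r), 2 * (v x - vbar) ^ 2 ≤
      12 * (r : ℝ) ^ 2 *
        (2 * ∑ x ∈ Finset.Icc (x₀ - r) (x₀ + r - 1), 2 * (v (x + 1) - v x) ^ 2) :=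
  poincare_inequality_on_Z_general r x₀ v vbar hvbar
end

section
/- Intermediate oscillation point: Let r be a positive integer, v : {-r,...,r} → ℝ, and v̄ = (1/(2r+1)) ∑_{x=-r}^{r} v(x). Then there exists an integer x̂ with -r ≤ x̂ < r such that max{|v(x̂+1) - v̄|, |v(x̂) - v̄|} ≤ |v(x̂) - v(x̂+1)|. -/
/-!
Write `f x = v x - v̄`. If `f x` and `f (x + 1)` have opposite signs (or one vanishes), then `v̄`
lies between `v x` and `v (x + 1)`, so both distances to `v̄` are at most `|v x - v (x + 1)|`.
If no consecutive pair had opposite signs, `f` would have constant strict sign on `[-r, r]`,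
contradicting `∑ f = 0`.
-/

open Finset

theorem Finset.sum_sub_sum_div_card {K : Type*} [Field K] [CharZero K] {ι : Type*}
    (s : Finset ι) (f : ι → K) : ∑ x ∈ s, (f x - (∑ y ∈ s, f y) / #s) = 0 := by
  rcases s.eq_empty_or_nonempty with rfl | hs
  · simp
  · rw [sum_sub_distrib, sum_const, nsmul_eq_mul,
      mul_div_cancel₀ _ (Nat.cast_ne_zero.mpr hs.card_pos.ne'), sub_self]

theorem max_abs_sub_le_abs_sub_of_mul_nonpos {R : Type*} [CommRing R] [LinearOrder R]
    [IsStrictOrderedRing R] {a b m : R} (h : (a - m) * (b - m) ≤ 0) :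
    max |b - m| |a - m| ≤ |a - b| := by
  rcases mul_nonpos_iff.mp h with ⟨ha, hb⟩ | ⟨ha, hb⟩
  · rw [abs_of_nonneg (by linarith : 0 ≤ a - b), abs_of_nonpos hb, abs_of_nonneg ha]
    exact max_le (by linarith) (by linarith)
  · rw [abs_of_nonpos (by linarith : a - b ≤ 0), abs_of_nonneg hb, abs_of_nonpos ha]
    exact max_le (by linarith) (by linarith)

section SignChange

variable {R : Type*} [CommRing R] [LinearOrder R] [IsStrictOrderedRing R] {f : ℤ → R} {a b : ℤ}

theorem mul_pos_of_forall_mul_succ_pos (hab : a < b)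
    (hf : ∀ x, a ≤ x → x < b → 0 < f x * f (x + 1)) :
    ∀ x, a ≤ x → x ≤ b → 0 < f a * f x := by
  intro x hax
  induction x, hax using Int.leInduction with
  | base =>
    intro _
    have hfa : f a ≠ 0 := fun h0 => by simpa [h0] using hf a le_rfl hab
    exact mul_self_pos.mpr hfa
  | succ n han ih =>
    intro hnb
    have h := mul_pos (ih (by omega)) (hf n han (by omega))
    rw [show f a * f n * (f n * f (n + 1)) = f a * f (n + 1) * (f n * f n) by ring] at h
    exact pos_of_mul_pos_left h (mul_self_nonneg _)

theorem exists_mul_succ_nonpos_of_sum_eq_zero (hab : a < b)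
    (hsum : ∑ x ∈ Icc a b, f x = 0) : ∃ x, a ≤ x ∧ x < b ∧ f x * f (x + 1) ≤ 0 := by
  by_contra! hf
  have hsign := mul_pos_of_forall_mul_succ_pos hab hf
  have hpos : 0 < ∑ x ∈ Icc a b, f a * f x :=
    sum_pos (fun x hx => hsign x (mem_Icc.mp hx).1 (mem_Icc.mp hx).2)
      ⟨a, mem_Icc.mpr ⟨le_rfl, hab.le⟩⟩
  rw [← mul_sum, hsum, mul_zero] at hpos
  exact hpos.false

end SignChange

theorem oscillation_point (r : ℕ) (hr : 0 < r) (v : ℤ → ℝ) (vbar : ℝ)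
    (hvbar : vbar = (∑ x ∈ Finset.Icc (-(r : ℤ)) r, v x) / (2 * r + 1)) :
    ∃ xhat : ℤ, -(r : ℤ) ≤ xhat ∧ xhat < r ∧
      max |v (xhat + 1) - vbar| |v xhat - vbar| ≤ |v xhat - v (xhat + 1)| := by
  have hcard : ((#(Icc (-(r : ℤ)) r) : ℕ) : ℝ) = 2 * r + 1 := by
    rw [Int.card_Icc]
    norm_cast
    omega
  have hsum : ∑ x ∈ Icc (-(r : ℤ)) r, (v x - vbar) = 0 := by
    rw [hvbar, ← hcard]
    exact sum_sub_sum_div_card _ v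
  obtain ⟨x, hrx, hxr, hx⟩ := exists_mul_succ_nonpos_of_sum_eq_zero (by omega) hsum
  exact ⟨x, hrx, hxr, max_abs_sub_le_abs_sub_of_mul_nonpos hx⟩
end

section
/- The minimal wave speed c* = inf_{μ>0} (e^μ + e^{-μ} - 1)/μ is attained at the unique μ* > 0 solving μ(e^μ - e^{-μ}) = e^μ + e^{-μ} - 1, and c* = e^{μ*} - e^{-μ*} = 2 sinh(μ*) > 2. -/
open Real Set

theorem ConvexOn.add_mul_sub_le_of_hasDerivAt {S : Set ℝ} {f : ℝ → ℝ} {f' x y : ℝ}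
    (hf : ConvexOn ℝ S f) (hx : x ∈ S) (hy : y ∈ S) (hd : HasDerivAt f f' x) :
    f x + f' * (y - x) ≤ f y := by
  rcases lt_trichotomy x y with hxy | rfl | hyx
  · have := hf.le_slope_of_hasDerivAt hx hy hxy hd
    rw [slope_def_field, le_div_iff₀ (sub_pos.2 hxy)] at this
    linarith
  · simp
  · have := hf.slope_le_of_hasDerivAt hy hx hyx hd
    rw [slope_def_field, div_le_iff₀ (sub_pos.2 hyx)] at this
    linarith

theorem ConvexOn.le_div_of_hasDerivAt_of_eq_mul {f : ℝ → ℝ} {f' a x : ℝ}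
    (hf : ConvexOn ℝ univ f) (hd : HasDerivAt f f' a) (ha : f a = a * f') (hx : 0 < x) :
    f' ≤ f x / x := by
  have := hf.add_mul_sub_le_of_hasDerivAt (mem_univ a) (mem_univ x) hd
  rw [le_div_iff₀ hx]
  linarith

theorem convexOn_exp_sub_one_add_exp_neg : ConvexOn ℝ univ (fun μ ↦ exp μ - 1 + exp (-μ)) := by
  have hneg : ConvexOn ℝ univ (fun μ ↦ exp (-μ)) :=
    convexOn_exp.comp_linearMap (-LinearMap.id)
  exact ((convexOn_exp.add hneg).add_const (-1)).congr fun μ _ ↦ by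
    simp only [Pi.add_apply]; ring

theorem hasDerivAt_exp_neg (μ : ℝ) : HasDerivAt (fun x ↦ exp (-x)) (-exp (-μ)) μ := by
  simpa using (hasDerivAt_neg μ).exp

theorem hasDerivAt_exp_sub_one_add_exp_neg (μ : ℝ) :
    HasDerivAt (fun x ↦ exp x - 1 + exp (-x)) (exp μ - exp (-μ)) μ :=
  (((hasDerivAt_exp μ).sub_const 1).add (hasDerivAt_exp_neg μ)).congr_deriv (by ring)

/-- Vanishes exactly where the tangent to `μ ↦ exp μ - 1 + exp (-μ)` passes through the origin,
i.e. at the critical points of `waveSpeed`. -/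
noncomputable def tangencyDefect (μ : ℝ) : ℝ :=
  μ * (exp μ - exp (-μ)) - (exp μ + exp (-μ) - 1)

theorem tangencyDefect_eq_zero_iff {μ : ℝ} :
    tangencyDefect μ = 0 ↔ μ * (exp μ - exp (-μ)) = exp μ + exp (-μ) - 1 :=
  sub_eq_zero

theorem hasDerivAt_tangencyDefect (μ : ℝ) :
    HasDerivAt tangencyDefect (μ * (exp μ + exp (-μ))) μ := by
  have hsub := (hasDerivAt_exp μ).sub (hasDerivAt_exp_neg μ)
  have hadd := (hasDerivAt_exp μ).add (hasDerivAt_exp_neg μ)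
  exact (((hasDerivAt_id μ).mul hsub).sub (hadd.sub_const 1)).congr_deriv (by
    simp only [id_eq, Pi.sub_apply]; ring)

theorem continuous_tangencyDefect : Continuous tangencyDefect := by
  unfold tangencyDefect
  fun_prop

theorem strictMonoOn_tangencyDefect : StrictMonoOn tangencyDefect (Ici 0) := by
  refine strictMonoOn_of_deriv_pos (convex_Ici 0) continuous_tangencyDefect.continuousOn ?_
  intro μ hμ
  rw [interior_Ici, mem_Ioi] at hμ
  rw [(hasDerivAt_tangencyDefect μ).deriv]
  positivity

theorem exp_nine_tenths_mem_Icc : exp 0.9 ∈ Icc 2.42 2.47 := by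
  constructor
  · have := sum_le_exp_of_nonneg (x := 0.9) (by norm_num) 4
    norm_num [Finset.sum_range_succ, Nat.factorial] at this
    linarith
  · have := exp_bound' (x := 0.9) (by norm_num) (by norm_num) (n := 4) (by norm_num)
    norm_num [Finset.sum_range_succ, Nat.factorial] at this
    linarith

theorem tangencyDefect_nine_tenths_neg : tangencyDefect 0.9 < 0 := by
  obtain ⟨hlo, hhi⟩ := exp_nine_tenths_mem_Icc
  have hinv : (1 / 2.47 : ℝ) ≤ exp (-0.9) := by
    rw [exp_neg, ← one_div]
    exact one_div_le_one_div_of_le (by positivity) hhi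
  unfold tangencyDefect
  linarith

theorem one_lt_sinh_nine_tenths : 1 < sinh 0.9 := by
  have hlo := exp_nine_tenths_mem_Icc.1
  have hinv : exp (-0.9) ≤ 1 / 2.42 := by
    rw [exp_neg, ← one_div]
    exact one_div_le_one_div_of_le (by norm_num) hlo
  rw [sinh_eq]
  linarith

theorem tangencyDefect_one_pos : 0 < tangencyDefect 1 := by
  have he : 2 < exp 1 := lt_trans (by norm_num) exp_one_gt_d9
  have hinv : exp (-1) < 1 / 2 := by
    rw [exp_neg, ← one_div]
    exact one_div_lt_one_div_of_lt (by norm_num) he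
  unfold tangencyDefect
  linarith

theorem exists_tangencyDefect_eq_zero : ∃ μ ∈ Ioo (0.9 : ℝ) 1, tangencyDefect μ = 0 :=
  intermediate_value_Ioo (by norm_num) continuous_tangencyDefect.continuousOn
    ⟨tangencyDefect_nine_tenths_neg, tangencyDefect_one_pos⟩

theorem minimal_wave_speed_attained :
    ∃ μs : ℝ, 0 < μs ∧
      μs * (Real.exp μs - Real.exp (-μs)) = Real.exp μs + Real.exp (-μs) - 1 ∧
      (∀ μ : ℝ, 0 < μ →
        μ * (Real.exp μ - Real.exp (-μ)) = Real.exp μ + Real.exp (-μ) - 1 → μ = μs) ∧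
      (∀ μ : ℝ, 0 < μ → waveSpeed μs ≤ waveSpeed μ) ∧
      waveSpeed μs = 2 * Real.sinh μs ∧
      2 < waveSpeed μs := by
  obtain ⟨μs, ⟨hlo, -⟩, hzero⟩ := exists_tangencyDefect_eq_zero
  have hpos : 0 < μs := by linarith
  have hcrit := tangencyDefect_eq_zero_iff.1 hzero
  have htangent : exp μs - 1 + exp (-μs) = μs * (exp μs - exp (-μs)) := by linarith
  have hspeed : waveSpeed μs = 2 * sinh μs := by
    rw [waveSpeed, htangent, mul_div_cancel_left₀ _ hpos.ne', sinh_eq]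
    ring
  refine ⟨μs, hpos, hcrit, fun μ hμ hμcrit ↦ ?_, fun μ hμ ↦ ?_, hspeed, ?_⟩
  · exact strictMonoOn_tangencyDefect.injOn hμ.le hpos.le
      (by rw [tangencyDefect_eq_zero_iff.2 hμcrit, hzero])
  · rw [hspeed, sinh_eq, mul_div_cancel₀ _ two_ne_zero]
    exact convexOn_exp_sub_one_add_exp_neg.le_div_of_hasDerivAt_of_eq_mul
      (hasDerivAt_exp_sub_one_add_exp_neg μs) htangent hμ
  · have := one_lt_sinh_nine_tenths.trans (sinh_lt_sinh.2 hlo)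
    linarith
end

section
/- Positivity condition for the perturbed eigenvector: With ψ_j = 1 + (1-a₀)e^{-μ}(1 - e^{2μj})/(1 - e^{-2μ}) for j < 0 and ψ_j = 1 for j ≥ 0, if a₀ ≤ e^μ - e^{-μ} + 1 then ψ_j > 0 for all j ∈ ℤ. Equivalently, ψ_j > 0 for all j iff μ ≥ ln((-(1-a₀) + √((1-a₀)² + 4))/2) when a₀ > 1, and always when a₀ ≤ 1. -/
/-!
Since `1 - e^{-2μ} = e^{-μ} · 2 sinh μ`, for `j < 0` we have
`ψ_j = 1 - (a₀ - 1)/(2 sinh μ) · (1 - e^{2μj})`, and the factor `1 - e^{2μj}` lies in `(0, 1)` and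
tends to `1` as `j → -∞` without reaching it. Hence all `ψ_j` are positive iff
`a₀ - 1 ≤ 2 sinh μ`, i.e. iff `arsinh ((a₀ - 1)/2) ≤ μ`, and `arsinh (t/2) = log ((t + √(t² + 4))/2)`.
-/

open Filter Topology Real

theorem forall_pos_one_sub_mul_iff {ι : Type*} {l : Filter ι} [l.NeBot] {q : ι → ℝ}
    (hq₀ : ∀ i, 0 ≤ q i) (hq₁ : ∀ i, q i < 1) (hq : Tendsto q l (𝓝 1)) (t : ℝ) :
    (∀ i, 0 < 1 - t * q i) ↔ t ≤ 1 := by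
  refine ⟨fun hpos => ?_, fun ht i => ?_⟩
  · by_contra! ht
    have hlim : Tendsto (fun i => 1 - t * q i) l (𝓝 (1 - t)) := by
      simpa using (hq.const_mul t).const_sub 1
    obtain ⟨i, hi⟩ := (hlim.eventually (gt_mem_nhds (sub_neg.mpr ht))).exists
    exact (hpos i).not_gt hi
  · rcases le_or_gt t 0 with ht₀ | ht₀
    · nlinarith [hq₀ i]
    · nlinarith [hq₁ i]

namespace Real

theorem log_add_sqrt_sq_add_four_div_two (t : ℝ) :
    log ((t + √(t ^ 2 + 4)) / 2) = arsinh (t / 2) := by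
  have h : √(1 + (t / 2) ^ 2) = √(t ^ 2 + 4) / 2 := by
    rw [show 1 + (t / 2) ^ 2 = (t ^ 2 + 4) / 2 ^ 2 by ring, sqrt_div' _ (by norm_num),
      sqrt_sq (by norm_num)]
  rw [arsinh, h, add_div]

theorem arsinh_le_iff_le_sinh {x y : ℝ} : arsinh x ≤ y ↔ x ≤ sinh y := by
  rw [← sinh_le_sinh, sinh_arsinh]

theorem one_sub_exp_neg_two_mul (x : ℝ) : 1 - exp (-2 * x) = exp (-x) * (2 * sinh x) := by
  rw [sinh_eq, show -2 * x = -x + -x by ring, exp_add]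
  have : exp (-x) * exp x = 1 := by rw [← exp_add]; simp
  linear_combination -this

end Real

noncomputable def tailProfile (μ : ℝ) (j : ℤ) : ℝ := if j < 0 then 1 - exp (2 * μ * j) else 0

theorem tailProfile_nonneg {μ : ℝ} (hμ : 0 ≤ μ) (j : ℤ) : 0 ≤ tailProfile μ j := by
  unfold tailProfile
  split_ifs with hj
  · have : 2 * μ * j ≤ 0 := mul_nonpos_of_nonneg_of_nonpos (by positivity) (by exact_mod_cast hj.le)
    linarith [exp_le_one_iff.mpr this]
  · rfl

theorem tailProfile_lt_one (μ : ℝ) (j : ℤ) : tailProfile μ j < 1 := by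
  unfold tailProfile
  split_ifs
  · linarith [exp_pos (2 * μ * j)]
  · exact one_pos

theorem tendsto_tailProfile_atBot {μ : ℝ} (hμ : 0 < μ) :
    Tendsto (tailProfile μ) atBot (𝓝 1) := by
  have hexp : Tendsto (fun j : ℤ => exp (2 * μ * j)) atBot (𝓝 0) :=
    tendsto_exp_atBot.comp <|
      (tendsto_intCast_atBot_iff.mpr tendsto_id).const_mul_atBot (by positivity)
  have hlim : Tendsto (fun j : ℤ => 1 - exp (2 * μ * j)) atBot (𝓝 1) := by
    simpa using hexp.const_sub 1
  refine hlim.congr' ?_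
  filter_upwards [eventually_lt_atBot 0] with j hj
  simp [tailProfile, hj]

theorem perturbed_eigenvector_positivity (μ a₀ : ℝ) (hμ : 0 < μ)
    (ψ : ℤ → ℝ) (hψ1 : ∀ j : ℤ, 0 ≤ j → ψ j = 1)
    (hψ2 : ∀ j : ℤ, j < 0 →
      ψ j = 1 + (1 - a₀) * Real.exp (-μ) * (1 - Real.exp (2 * μ * j)) / (1 - Real.exp (-2 * μ))) :
    (a₀ ≤ Real.exp μ - Real.exp (-μ) + 1 → ∀ j : ℤ, 0 < ψ j) ∧
    (a₀ ≤ 1 → ∀ j : ℤ, 0 < ψ j) ∧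
    (1 < a₀ →
      ((∀ j : ℤ, 0 < ψ j) ↔
        Real.log ((-(1 - a₀) + Real.sqrt ((1 - a₀) ^ 2 + 4)) / 2) ≤ μ)) := by
  have hsinh : 0 < 2 * sinh μ := by positivity
  have hψ : ∀ j, ψ j = 1 - (a₀ - 1) / (2 * sinh μ) * tailProfile μ j := by
    intro j
    rcases lt_or_ge j 0 with hj | hj
    · rw [hψ2 j hj, one_sub_exp_neg_two_mul, tailProfile, if_pos hj]
      field_simp
      ring
    · simp [hψ1 j hj, tailProfile, not_lt.mpr hj]
  have hpos : (∀ j, 0 < ψ j) ↔ a₀ - 1 ≤ 2 * sinh μ := by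
    simp only [hψ]
    rw [forall_pos_one_sub_mul_iff (tailProfile_nonneg hμ.le) (tailProfile_lt_one μ)
      (tendsto_tailProfile_atBot hμ), div_le_one hsinh]
  have hgap : exp μ - exp (-μ) = 2 * sinh μ := by rw [sinh_eq]; ring
  refine ⟨fun h => hpos.2 (by linarith), fun h => hpos.2 (by linarith), fun _ => ?_⟩
  rw [hpos, neg_sub, sub_sq_comm, log_add_sqrt_sq_add_four_div_two, arsinh_le_iff_le_sinh]
  constructor <;> intro h <;> linarith
end
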